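/- For 1 < p ≤ 2, for all s₁ ≥ s₂ ≥ 0 with s₁ + s₂ > 0, we have (s₁^{p-1} - s₂^{p-1})·(s₁+s₂)^{2-p} ≥ (p-1)·(s₁ - s₂). -/
import Mathlib

open Real

theorem stmt_4 (p : ℝ) (hp1 : 1 < p) (hp2 : p ≤ 2)
    (s₁ s₂ : ℝ) (h₂ : 0 ≤ s₂) (h₁₂ : s₂ ≤ s₁) (hsum : 0 < s₁ + s₂) :
    (s₁ ^ (p - 1) - s₂ ^ (p - 1)) * (s₁ + s₂) ^ (2 - p) ≥ (p - 1) * (s₁ - s₂) := by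
  have hs1 : 0 < s₁ := by linarith
  have hα0 : 0 ≤ p - 1 := by linarith
  have hα1 : p - 1 ≤ 1 := by linarith
  have hdiv : 0 ≤ s₂ / s₁ := div_nonneg h₂ hs1.le
  -- Bernoulli: (s₂/s₁)^(p-1) ≤ 1 + (p-1)*(s₂/s₁ - 1)
  have hb := rpow_one_add_le_one_add_mul_self (s := s₂ / s₁ - 1) (by linarith) hα0 hα1
  rw [show (1 : ℝ) + (s₂ / s₁ - 1) = s₂ / s₁ by ring] at hb
  have hpow1 : 0 < s₁ ^ (p - 1) := rpow_pos_of_pos hs1 _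
  -- s₂^(p-1) ≤ s₁^(p-1) + (p-1) * s₁^(p-1) * (s₂/s₁ - 1)
  have key : s₂ ^ (p - 1) ≤ s₁ ^ (p - 1) * (1 + (p - 1) * (s₂ / s₁ - 1)) := by
    have := mul_le_mul_of_nonneg_left hb hpow1.le
    rwa [Real.div_rpow h₂ hs1.le, mul_div_cancel₀ _ (ne_of_gt hpow1)] at this
  -- so s₁^(p-1) - s₂^(p-1) ≥ (p-1) * s₁^(p-2) * (s₁ - s₂)
  have hsub : s₁ ^ (p - 1) - s₂ ^ (p - 1) ≥ (p - 1) * s₁ ^ (p - 2) * (s₁ - s₂) := by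
    have hid : s₁ ^ (p - 2) = s₁ ^ (p - 1) / s₁ := by
      rw [show p - 2 = (p - 1) - 1 by ring, Real.rpow_sub hs1, Real.rpow_one]
    rw [hid]
    have h1 : s₁ ^ (p - 1) * (1 + (p - 1) * (s₂ / s₁ - 1))
        = s₁ ^ (p - 1) - (p - 1) * (s₁ ^ (p - 1) / s₁) * (s₁ - s₂) := by
      field_simp
      ring
    rw [h1] at key
    linarith
  -- s₁^(p-2) ≥ (s₁+s₂)^(p-2)
  have hmono : (s₁ + s₂) ^ (p - 2) ≤ s₁ ^ (p - 2) :=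
    rpow_le_rpow_of_nonpos hs1 (by linarith) (by linarith)
  have hcancel : (s₁ + s₂) ^ (p - 2) * (s₁ + s₂) ^ (2 - p) = 1 := by
    rw [← Real.rpow_add hsum]
    norm_num
  have hpos2 : 0 < (s₁ + s₂) ^ (2 - p) := rpow_pos_of_pos hsum _
  have hstep : (s₁ ^ (p - 1) - s₂ ^ (p - 1)) * (s₁ + s₂) ^ (2 - p)
      ≥ ((p - 1) * (s₁ + s₂) ^ (p - 2) * (s₁ - s₂)) * (s₁ + s₂) ^ (2 - p) := by
    have hle : (p - 1) * (s₁ + s₂) ^ (p - 2) * (s₁ - s₂) ≤ s₁ ^ (p - 1) - s₂ ^ (p - 1) := by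
      have := mul_le_mul_of_nonneg_right (mul_le_mul_of_nonneg_left hmono hα0)
        (by linarith : (0:ℝ) ≤ s₁ - s₂)
      linarith
    exact mul_le_mul_of_nonneg_right hle hpos2.le
  calc (s₁ ^ (p - 1) - s₂ ^ (p - 1)) * (s₁ + s₂) ^ (2 - p)
      ≥ ((p - 1) * (s₁ + s₂) ^ (p - 2) * (s₁ - s₂)) * (s₁ + s₂) ^ (2 - p) := hstep
    _ = (p - 1) * (s₁ - s₂) * ((s₁ + s₂) ^ (p - 2) * (s₁ + s₂) ^ (2 - p)) := by ring
    _ = (p - 1) * (s₁ - s₂) := by rw [hcancel, mul_one]
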